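/- arXiv:2211.08578 — 6 statements merged into one kernel-verified Lean document; each statement's English description precedes it below -/
import Mathlib

section
/- Let n ≥ 1, let A be an n×n real symmetric matrix with all eigenvalues in [μ, L] where 0 < μ ≤ L, let b ∈ ℝⁿ, and let f(x) = ½xᵀAx − bᵀx. Fix a step size η with 0 < η ≤ 2/(L+μ), a window length m ≥ 1, and a regularization parameter λ > 0. Given points x_{k−m}, …, x_k ∈ ℝⁿ with ∇f(x_k) ≠ 0, perform one Anderson-accelerated gradient step: let U_k be the n×m matrix whose columns are ∇f(x_k) − ∇f(x_j) for j = k−m, …, k−1; set (α_{k−m}, …, α_{k−1})ᵀ = (U_kᵀU_k + λI)⁻¹U_kᵀ∇f(x_k) and α_k = 1 − Σ_{j=k−m}^{k−1} α_j; and set x_{k+1} = Σ_{j=k−m}^{k} α_j (x_j − η∇f(x_j)). Then ‖∇f(x_{k+1})‖ ≤ δ_k (1 − ημ) ‖∇f(x_k)‖, where Π_k = I − U_k(U_kᵀU_k + λI)⁻¹U_kᵀ and δ_k = ‖Π_k∇f(x_k)‖/‖∇f(x_k)‖ satisfies δ_k ≤ 1. -/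
open scoped RealInnerProductSpace Matrix
open Finset

/-! Since `∇f = A · - b` is affine and the mixing weights sum to one, the gradient at the Anderson
iterate is `(I - ηA) v` with `v = ∑ α_j ∇f(x_j) = Π_k ∇f(x_k)`. The Rayleigh quotients of the
symmetric map `I - ηA` lie in `[1 - ηL, 1 - ημ] ⊆ [-(1 - ημ), 1 - ημ]`, which bounds its norm by
`1 - ημ`. Finally `δ_k ≤ 1`: the ridge residual `r = G - Uα` satisfies the normal equations
`Uᵀ r = λ α`, so `⟪r, Uα⟫ = λ‖α‖² ≥ 0` and `‖G‖² = ‖r + Uα‖² ≥ ‖r‖²`. -/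

section

variable {E : Type*} [NormedAddCommGroup E] [InnerProductSpace ℝ E]

theorem ContinuousLinearMap.opNorm_le_of_abs_inner_self_le {T : E →L[ℝ] E}
    (hT : (T : E →ₗ[ℝ] E).IsSymmetric) {c : ℝ} (hc : 0 ≤ c)
    (h : ∀ x, |⟪T x, x⟫| ≤ c * ‖x‖ ^ 2) : ‖T‖ ≤ c := by
  rw [T.norm_eq_iSup_rayleighQuotient hT]
  refine ciSup_le fun x => ?_
  rw [ContinuousLinearMap.rayleighQuotient, ContinuousLinearMap.reApplyInnerSelf_apply,
    RCLike.re_to_real, abs_div, abs_sq]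
  exact div_le_of_le_mul₀ (by positivity) hc (h x)

theorem ContinuousLinearMap.norm_sub_smul_apply_le {T : E →L[ℝ] E}
    (hT : (T : E →ₗ[ℝ] E).IsSymmetric) {μ L η : ℝ} (hμL : μ ≤ L)
    (hspec : ∀ v, μ * ‖v‖ ^ 2 ≤ ⟪T v, v⟫ ∧ ⟪T v, v⟫ ≤ L * ‖v‖ ^ 2)
    (hη0 : 0 ≤ η) (hη : η * (L + μ) ≤ 2) (v : E) :
    ‖v - η • T v‖ ≤ (1 - η * μ) * ‖v‖ := by
  set S : E →L[ℝ] E := ContinuousLinearMap.id ℝ E - η • T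
  have hS : (S : E →ₗ[ℝ] E).IsSymmetric := LinearMap.IsSymmetric.id.sub (hT.smul rfl)
  have hc : 0 ≤ 1 - η * μ := by nlinarith
  have hSv : ∀ x, |⟪S x, x⟫| ≤ (1 - η * μ) * ‖x‖ ^ 2 := fun x => by
    have hx : ⟪S x, x⟫ = ‖x‖ ^ 2 - η * ⟪T x, x⟫ := by
      simp [S, inner_sub_left, real_inner_smul_left]
    obtain ⟨hlo, hhi⟩ := hspec x
    rw [hx, abs_le]
    constructor <;> nlinarith [sq_nonneg ‖x‖]
  exact (S.le_opNorm v).trans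
    (mul_le_mul_of_nonneg_right (S.opNorm_le_of_abs_inner_self_le hS hc hSv) (norm_nonneg v))

end

theorem norm_sub_apply_le_of_adjoint_sub_apply_eq
    {E F : Type*} [NormedAddCommGroup E] [InnerProductSpace ℝ E] [FiniteDimensional ℝ E]
    [NormedAddCommGroup F] [InnerProductSpace ℝ F] [FiniteDimensional ℝ F]
    (T : F →ₗ[ℝ] E) {lam : ℝ} (hlam : 0 ≤ lam) {G : E} {a : F}
    (ha : LinearMap.adjoint T (G - T a) = lam • a) : ‖G - T a‖ ≤ ‖G‖ := by
  have horth : 0 ≤ ⟪G - T a, T a⟫ := by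
    rw [← LinearMap.adjoint_inner_left, ha, real_inner_smul_left]
    exact mul_nonneg hlam real_inner_self_nonneg
  have hsq : ‖G‖ ^ 2 = ‖G - T a‖ ^ 2 + 2 * ⟪G - T a, T a⟫ + ‖T a‖ ^ 2 := by
    rw [← norm_add_sq_real, sub_add_cancel]
  exact sq_le_sq₀ (norm_nonneg _) (norm_nonneg _) |>.mp (by nlinarith [sq_nonneg ‖T a‖])

theorem Matrix.transpose_mulVec_sub_mulVec_ridge {ι κ : Type*} [Fintype ι] [Fintype κ]
    [DecidableEq κ] (U : Matrix ι κ ℝ) {lam : ℝ} (hlam : 0 < lam) (v : ι → ℝ) :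
    Uᵀ *ᵥ (v - U *ᵥ (((Uᵀ * U + lam • 1)⁻¹ * Uᵀ) *ᵥ v))
      = lam • (((Uᵀ * U + lam • 1)⁻¹ * Uᵀ) *ᵥ v) := by
  set S := Uᵀ * U + lam • 1
  set a := (S⁻¹ * Uᵀ) *ᵥ v
  have hS : IsUnit S.det := by
    have hpd : S.PosDef := by
      simpa [Matrix.conjTranspose_eq_transpose_of_trivial] using
        Matrix.PosDef.posSemidef_add (Matrix.posSemidef_conjTranspose_mul_self U)
          (Matrix.PosDef.one.smul hlam)
    exact (Matrix.isUnit_iff_isUnit_det S).mp hpd.isUnit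
  have hSa : S *ᵥ a = Uᵀ *ᵥ v := by
    rw [Matrix.mulVec_mulVec, ← Matrix.mul_assoc, Matrix.mul_nonsing_inv S hS, Matrix.one_mul]
  calc Uᵀ *ᵥ (v - U *ᵥ a) = S *ᵥ a - (Uᵀ * U) *ᵥ a := by
        rw [Matrix.mulVec_sub, hSa, Matrix.mulVec_mulVec]
    _ = lam • a := by
        rw [Matrix.add_mulVec, Matrix.smul_mulVec, Matrix.one_mulVec, add_sub_cancel_left]

theorem Matrix.toEuclideanLin_one_sub_ridge_apply {ι κ : Type*} [Fintype ι] [DecidableEq ι]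
    [Fintype κ] [DecidableEq κ] (U : Matrix ι κ ℝ) (lam : ℝ) (G : EuclideanSpace ℝ ι) :
    toEuclideanLin (1 - U * (Uᵀ * U + lam • 1)⁻¹ * Uᵀ) G
      = G - toEuclideanLin U (WithLp.toLp 2 (((Uᵀ * U + lam • 1)⁻¹ * Uᵀ) *ᵥ G)) := by
  ext i
  simp [Matrix.mulVec_mulVec, Matrix.mul_assoc]

theorem Matrix.norm_toEuclideanLin_one_sub_ridge_apply_le {ι κ : Type*} [Fintype ι]
    [DecidableEq ι] [Fintype κ] [DecidableEq κ] (U : Matrix ι κ ℝ) {lam : ℝ} (hlam : 0 < lam)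
    (G : EuclideanSpace ℝ ι) :
    ‖toEuclideanLin (1 - U * (Uᵀ * U + lam • 1)⁻¹ * Uᵀ) G‖ ≤ ‖G‖ := by
  rw [U.toEuclideanLin_one_sub_ridge_apply]
  refine norm_sub_apply_le_of_adjoint_sub_apply_eq _ hlam.le ?_
  rw [← Matrix.toEuclideanLin_conjTranspose_eq_adjoint,
    Matrix.conjTranspose_eq_transpose_of_trivial]
  exact congrArg (WithLp.toLp 2) (U.transpose_mulVec_sub_mulVec_ridge hlam G.ofLp)

theorem Matrix.toEuclideanLin_apply_eq_sum_smul {ι κ : Type*} [Fintype ι] [Fintype κ]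
    [DecidableEq κ] {U : Matrix ι κ ℝ} {c : κ → EuclideanSpace ℝ ι}
    (hU : ∀ i j, U i j = c j i) (a : EuclideanSpace ℝ κ) :
    toEuclideanLin U a = ∑ j, a j • c j := by
  ext i
  simp [Matrix.mulVec, dotProduct, hU, mul_comm]

theorem apply_sum_smul_sub_smul_apply_of_eq_sub {R M ι : Type*} [CommRing R] [AddCommGroup M]
    [Module R M] (T : M →ₗ[R] M) (b : M) {g : M → M} (hg : ∀ z, g z = T z - b)
    (s : Finset ι) {w : ι → R} (hw : ∑ i ∈ s, w i = 1) (y : ι → M) (η : R) :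
    g (∑ i ∈ s, w i • (y i - η • g (y i)))
      = ∑ i ∈ s, w i • g (y i) - η • T (∑ i ∈ s, w i • g (y i)) := by
  have hb : b = ∑ i ∈ s, w i • b := by rw [← sum_smul, hw, one_smul]
  rw [hg, hb, map_sum, ← sum_sub_distrib, map_sum, smul_sum, ← sum_sub_distrib]
  refine sum_congr rfl fun i _ => ?_
  simp only [hg (y i), map_sub, map_smul]
  module

theorem aa_gd_quadratic_one_step_general
    (n m : ℕ)
    (A : Matrix (Fin n) (Fin n) ℝ) (hA : A.IsSymm)
    (μ L : ℝ) (hμ : 0 < μ) (hμL : μ ≤ L)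
    (hspec : ∀ v : EuclideanSpace ℝ (Fin n),
      μ * ‖v‖ ^ 2 ≤ ⟪Matrix.toEuclideanLin A v, v⟫ ∧
      ⟪Matrix.toEuclideanLin A v, v⟫ ≤ L * ‖v‖ ^ 2)
    (b : EuclideanSpace ℝ (Fin n))
    (g : EuclideanSpace ℝ (Fin n) → EuclideanSpace ℝ (Fin n))
    (hg : ∀ z, g z = Matrix.toEuclideanLin A z - b)
    (η : ℝ) (hη0 : 0 < η) (hη : η ≤ 2 / (L + μ))
    (lam : ℝ) (hlam : 0 < lam)
    -- the window of points `x 0, …, x m`, where `x (Fin.last m)` plays the role of `x_k`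
    (x : Fin (m + 1) → EuclideanSpace ℝ (Fin n))
    -- the matrix `U_k`, with columns `∇f(x_k) − ∇f(x_j)`, `j = k−m, …, k−1`
    (U : Matrix (Fin n) (Fin m) ℝ)
    (hU : ∀ (i : Fin n) (j : Fin m), U i j = (g (x (Fin.last m)) - g (x j.castSucc)) i)
    -- the regularized least-squares coefficients
    (α' : Fin m → ℝ)
    (hα' : α' = ((Uᵀ * U + lam • 1)⁻¹ * Uᵀ).mulVec (g (x (Fin.last m))))
    (αk : ℝ) (hαk : αk = 1 - ∑ j, α' j)
    -- the Anderson-accelerated iterate `x_{k+1}`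
    (xnew : EuclideanSpace ℝ (Fin n))
    (hxnew : xnew =
      (∑ j : Fin m, α' j • (x j.castSucc - η • g (x j.castSucc)))
        + αk • (x (Fin.last m) - η • g (x (Fin.last m))))
    -- the projection operator `Π_k` and the gain `δ_k`
    (P : Matrix (Fin n) (Fin n) ℝ)
    (hP : P = 1 - U * (Uᵀ * U + lam • 1)⁻¹ * Uᵀ)
    (δ : ℝ)
    (hδ : δ = ‖Matrix.toEuclideanLin P (g (x (Fin.last m)))‖ / ‖g (x (Fin.last m))‖) :
    ‖g xnew‖ ≤ δ * (1 - η * μ) * ‖g (x (Fin.last m))‖ ∧ δ ≤ 1 := by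
  set G := g (x (Fin.last m))
  set v := Matrix.toEuclideanLin P G
  set w : Fin (m + 1) → ℝ := Fin.snoc α' αk
  have hw : ∑ i, w i = 1 := by simp [w, Fin.sum_univ_castSucc, hαk]
  have hmix : ∑ i, w i • g (x i) = v := by
    simp only [v, hP]
    rw [Matrix.toEuclideanLin_one_sub_ridge_apply, ← hα',
      Matrix.toEuclideanLin_apply_eq_sum_smul (c := fun j => G - g (x j.castSucc)) hU,
      Fin.sum_univ_castSucc]
    simp only [w, G, hαk, Fin.snoc_castSucc, Fin.snoc_last, smul_sub, sub_smul, one_smul,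
      sum_smul, sum_sub_distrib]
    abel
  have hstep : g xnew = v - η • Matrix.toEuclideanLin A v := by
    have hxw : xnew = ∑ i, w i • (x i - η • g (x i)) := by
      simp [hxnew, w, G, Fin.sum_univ_castSucc]
    rw [hxw, apply_sum_smul_sub_smul_apply_of_eq_sub _ b hg _ hw, hmix]
  have hcontr : ‖v - η • Matrix.toEuclideanLin A v‖ ≤ (1 - η * μ) * ‖v‖ :=
    ContinuousLinearMap.norm_sub_smul_apply_le
      (T := LinearMap.toContinuousLinearMap (Matrix.toEuclideanLin A))
      (Matrix.isSymmetric_toEuclideanLin_iff.mpr (Matrix.isHermitian_iff_isSymm.mpr hA))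
      hμL hspec hη0.le ((le_div_iff₀ (by linarith)).mp hη) v
  have hproj : ‖v‖ ≤ ‖G‖ := by
    simpa only [v, hP] using U.norm_toEuclideanLin_one_sub_ridge_apply_le hlam G
  have hδv : δ * ‖G‖ = ‖v‖ :=
    hδ ▸ div_mul_cancel_of_imp fun h => by simp [v, norm_eq_zero.mp h]
  refine ⟨?_, hδ ▸ div_le_one_of_le₀ hproj (norm_nonneg G)⟩
  calc ‖g xnew‖ = ‖v - η • Matrix.toEuclideanLin A v‖ := by rw [hstep]
    _ ≤ (1 - η * μ) * ‖v‖ := hcontr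
    _ = δ * (1 - η * μ) * ‖G‖ := by rw [← hδv]; ring

/-- **Anderson-accelerated gradient step on a quadratic: one-step gain bound.**
For `f x = ½ xᵀAx − bᵀx` with symmetric `A` whose spectrum lies in `[μ, L]`,
`0 < μ ≤ L`, step size `0 < η ≤ 2/(L+μ)`, window `m ≥ 1`, regularization `lam > 0`,
the Anderson step satisfies `‖∇f(x_{k+1})‖ ≤ δ_k (1 − ημ) ‖∇f(x_k)‖` with `δ_k ≤ 1`. -/
theorem aa_gd_quadratic_one_step
    (n m : ℕ) (hn : 1 ≤ n) (hm : 1 ≤ m)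
    (A : Matrix (Fin n) (Fin n) ℝ) (hA : A.IsSymm)
    (μ L : ℝ) (hμ : 0 < μ) (hμL : μ ≤ L)
    (hspec : ∀ v : EuclideanSpace ℝ (Fin n),
      μ * ‖v‖ ^ 2 ≤ ⟪Matrix.toEuclideanLin A v, v⟫ ∧
      ⟪Matrix.toEuclideanLin A v, v⟫ ≤ L * ‖v‖ ^ 2)
    (b : EuclideanSpace ℝ (Fin n))
    (g : EuclideanSpace ℝ (Fin n) → EuclideanSpace ℝ (Fin n))
    (hg : ∀ z, g z = Matrix.toEuclideanLin A z - b)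
    (η : ℝ) (hη0 : 0 < η) (hη : η ≤ 2 / (L + μ))
    (lam : ℝ) (hlam : 0 < lam)
    -- the window of points `x 0, …, x m`, where `x (Fin.last m)` plays the role of `x_k`
    (x : Fin (m + 1) → EuclideanSpace ℝ (Fin n))
    (hgk : g (x (Fin.last m)) ≠ 0)
    -- the matrix `U_k`, with columns `∇f(x_k) − ∇f(x_j)`, `j = k−m, …, k−1`
    (U : Matrix (Fin n) (Fin m) ℝ)
    (hU : ∀ (i : Fin n) (j : Fin m), U i j = (g (x (Fin.last m)) - g (x j.castSucc)) i)
    -- the regularized least-squares coefficients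
    (α' : Fin m → ℝ)
    (hα' : α' = ((Uᵀ * U + lam • 1)⁻¹ * Uᵀ).mulVec (g (x (Fin.last m))))
    (αk : ℝ) (hαk : αk = 1 - ∑ j, α' j)
    -- the Anderson-accelerated iterate `x_{k+1}`
    (xnew : EuclideanSpace ℝ (Fin n))
    (hxnew : xnew =
      (∑ j : Fin m, α' j • (x j.castSucc - η • g (x j.castSucc)))
        + αk • (x (Fin.last m) - η • g (x (Fin.last m))))
    -- the projection operator `Π_k` and the gain `δ_k`
    (P : Matrix (Fin n) (Fin n) ℝ)
    (hP : P = 1 - U * (Uᵀ * U + lam • 1)⁻¹ * Uᵀ)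
    (δ : ℝ)
    (hδ : δ = ‖Matrix.toEuclideanLin P (g (x (Fin.last m)))‖ / ‖g (x (Fin.last m))‖) :
    ‖g xnew‖ ≤ δ * (1 - η * μ) * ‖g (x (Fin.last m))‖ ∧ δ ≤ 1 :=
  aa_gd_quadratic_one_step_general n m A hA μ L hμ hμL hspec b g hg η hη0 hη lam hlam x U hU α' hα'
    αk hαk xnew hxnew P hP δ hδ
end

section
/- Let n ≥ 1, let A be an n×n real symmetric matrix with all eigenvalues in [μ, L] where 0 < μ ≤ L, let b ∈ ℝⁿ, and let f(x) = ½xᵀAx − bᵀx with unique minimizer x* = A⁻¹b. Fix 0 < η ≤ 2/(L+μ), m ≥ 1, λ > 0. Suppose a sequence x_0, x_1, …, x_{K+1} is generated so that for each k = 0, …, K the iterate x_{k+1} is produced by the Anderson-accelerated gradient step with window m_k = min(m, k) (for m_k = 0 the step is plain gradient descent x_{k+1} = x_k − η∇f(x_k) and we set δ_k = 1; for m_k ≥ 1, with α computed from the regularized least squares, x_{k+1} = Σ_{j=k−m_k}^{k} α_j (x_j − η∇f(x_j)) and δ_k = ‖Π_k∇f(x_k)‖/‖∇f(x_k)‖,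 where Π_k = I − U_k(U_kᵀU_k + λI)⁻¹U_kᵀ and U_k has columns ∇f(x_k) − ∇f(x_j), j = k−m_k, …, k−1). Then ‖x_{K+1} − x*‖ ≤ (∏_{j=0}^{K} δ_j) (1 − ημ)^{K+1} (L/μ) ‖x_0 − x*‖. -/
/-!
Since `∇f z = A (z - x*)` is affine, the gradient at an Anderson iterate is the same affine
combination of the gradients at the gradient-descent updates `x_j - η ∇f(x_j)`, and
`∇f(x_j - η ∇f(x_j)) = (I - η A) ∇f(x_j)`. The affine combination of the gradients `∇f(x_j)`
with the least-squares weights is exactly `Π_k ∇f(x_k)`, so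
`∇f(x_{k+1}) = (I - η A) Π_k ∇f(x_k)`. The spectrum of `I - η A` lies in
`[1 - ηL, 1 - ημ] ⊆ [-(1 - ημ), 1 - ημ]` because `η(L + μ) ≤ 2`, hence
`‖∇f(x_{k+1})‖ ≤ δ_k (1 - ημ) ‖∇f(x_k)‖`. Iterating and comparing gradients with errors through
`μ ‖z - x*‖ ≤ ‖∇f z‖ ≤ L ‖z - x*‖` gives the bound.
-/

open scoped RealInnerProductSpace Matrix
open Finset

theorem mul_norm_le_norm_of_mul_norm_sq_le_inner {E : Type*} [NormedAddCommGroup E]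
    [InnerProductSpace ℝ E] {μ : ℝ} {v w : E} (h : μ * ‖v‖ ^ 2 ≤ ⟪w, v⟫) : μ * ‖v‖ ≤ ‖w‖ := by
  rcases eq_or_ne v 0 with rfl | hv
  · simp
  · have hv' : 0 < ‖v‖ := norm_pos_iff.2 hv
    have : μ * ‖v‖ * ‖v‖ ≤ ‖w‖ * ‖v‖ := by
      nlinarith [real_inner_le_norm w v]
    exact le_of_mul_le_mul_right this hv'

theorem LinearMap.injective_of_mul_norm_sq_le_inner {E : Type*} [NormedAddCommGroup E]
    [InnerProductSpace ℝ E] {T : E →ₗ[ℝ] E} {μ : ℝ} (hμ : 0 < μ)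
    (h : ∀ v, μ * ‖v‖ ^ 2 ≤ ⟪T v, v⟫) : Function.Injective T :=
  (injective_iff_map_eq_zero T).2 fun v hv => by
    have := mul_norm_le_norm_of_mul_norm_sq_le_inner (h v)
    rw [hv, norm_zero] at this
    exact norm_le_zero_iff.1 (nonpos_of_mul_nonpos_right this hμ)

theorem Matrix.toEuclideanLin_apply_toEuclideanLin_inv {𝕜 ι : Type*} [RCLike 𝕜] [Fintype ι]
    [DecidableEq ι] {A : Matrix ι ι 𝕜} (hA : Function.Injective (Matrix.toEuclideanLin A))
    (b : EuclideanSpace 𝕜 ι) : Matrix.toEuclideanLin A (Matrix.toEuclideanLin A⁻¹ b) = b := by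
  have hunit : IsUnit A := Matrix.mulVec_injective_iff_isUnit.1 fun u v huv =>
    congrArg WithLp.ofLp (hA (a₁ := WithLp.toLp 2 u) (a₂ := WithLp.toLp 2 v) (by simp [huv]))
  rw [← LinearMap.comp_apply, ← Matrix.toLpLin_mul,
    Matrix.mul_nonsing_inv _ (A.isUnit_iff_isUnit_det.1 hunit), Matrix.toLpLin_one]
  rfl

theorem Matrix.toEuclideanLin_one_sub_mul_apply_eq {𝕜 ι κ : Type*} [RCLike 𝕜] [Fintype ι]
    [DecidableEq ι] [Fintype κ] (U : Matrix ι κ 𝕜) (B : Matrix κ ι 𝕜) (r : EuclideanSpace 𝕜 ι)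
    (s : κ → EuclideanSpace 𝕜 ι) (hU : ∀ i j, U i j = (r - s j) i) :
    Matrix.toEuclideanLin (1 - U * B) r =
      ∑ j, (B *ᵥ r) j • s j + (1 - ∑ j, (B *ᵥ r) j) • r := by
  set α := B *ᵥ WithLp.ofLp r
  have hα : (1 - U * B) *ᵥ WithLp.ofLp r = WithLp.ofLp r - U *ᵥ α := by
    rw [Matrix.sub_mulVec, Matrix.one_mulVec, ← Matrix.mulVec_mulVec]
  ext i
  simp only [Matrix.toLpLin_apply, hα, WithLp.ofLp_toLp, Pi.sub_apply, Matrix.mulVec,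
    dotProduct, hU, PiLp.sub_apply, PiLp.add_apply, WithLp.ofLp_sum, WithLp.ofLp_smul,
    Finset.sum_apply, Pi.smul_apply, smul_eq_mul, PiLp.smul_apply, mul_comm, mul_sub,
    sum_sub_distrib]
  rw [← sum_mul]
  ring

theorem le_prod_range_mul_of_le_mul {R : Type*} [CommSemiring R] [PartialOrder R]
    [IsOrderedRing R] {c e : ℕ → R} {K : ℕ} (hc : ∀ k ≤ K, 0 ≤ c k)
    (he : ∀ k ≤ K, e (k + 1) ≤ c k * e k) : e (K + 1) ≤ (∏ j ∈ range (K + 1), c j) * e 0 := by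
  induction K with
  | zero => simpa using he 0 le_rfl
  | succ K ih =>
    calc e (K + 2) ≤ c (K + 1) * e (K + 1) := he _ le_rfl
      _ ≤ c (K + 1) * ((∏ j ∈ range (K + 1), c j) * e 0) :=
        mul_le_mul_of_nonneg_left (ih (fun k hk => hc k (by omega)) fun k hk => he k (by omega))
          (hc _ le_rfl)
      _ = (∏ j ∈ range (K + 2), c j) * e 0 := by rw [prod_range_succ _ (K + 1)]; ring

section AffineGradient

variable {ι R E : Type*} [CommRing R] [AddCommGroup E] [Module R E]

theorem LinearMap.map_affine_comb_sub (T : E →ₗ[R] E) (s : Finset ι) (α : ι → R) (ys : ι → E)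
    (y c : E) :
    T (∑ j ∈ s, α j • ys j + (1 - ∑ j ∈ s, α j) • y - c) =
      ∑ j ∈ s, α j • T (ys j - c) + (1 - ∑ j ∈ s, α j) • T (y - c) := by
  have : ∑ j ∈ s, α j • ys j + (1 - ∑ j ∈ s, α j) • y - c =
      ∑ j ∈ s, α j • (ys j - c) + (1 - ∑ j ∈ s, α j) • (y - c) := by
    simp only [smul_sub, sum_sub_distrib, ← sum_smul, sub_smul, one_smul]
    abel
  rw [this, map_add, map_sum]
  simp only [map_smul]

theorem gradient_gd_step {T : E →ₗ[R] E} {c : E} {g : E → E} (hg : ∀ z, g z = T (z - c))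
    (η : R) (y : E) :
    g (y - η • g y) = g y - η • T (g y) := by
  rw [hg, hg, sub_right_comm, map_sub, map_smul]

theorem gradient_affine_comb_gd_steps {T : E →ₗ[R] E} {c : E} {g : E → E}
    (hg : ∀ z, g z = T (z - c)) (η : R) (s : Finset ι) (α : ι → R) (ys : ι → E) (y : E) :
    g (∑ j ∈ s, α j • (ys j - η • g (ys j)) + (1 - ∑ j ∈ s, α j) • (y - η • g y)) =
      (LinearMap.id - η • T : E →ₗ[R] E)
        (∑ j ∈ s, α j • g (ys j) + (1 - ∑ j ∈ s, α j) • g y) := by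
  have hstep : ∀ z, T (z - η • g z - c) = (LinearMap.id - η • T : E →ₗ[R] E) (g z) := fun z => by
    rw [← hg, gradient_gd_step hg]
    rfl
  rw [hg, T.map_affine_comb_sub, map_add, map_sum]
  simp only [map_smul, hstep]

end AffineGradient

theorem norm_gradient_anderson_step_le {ι κ : Type*} [Fintype ι] [DecidableEq ι] [Fintype κ]
    {T : EuclideanSpace ℝ ι →ₗ[ℝ] EuclideanSpace ℝ ι} {c : EuclideanSpace ℝ ι}
    {g : EuclideanSpace ℝ ι → EuclideanSpace ℝ ι} (hg : ∀ z, g z = T (z - c)) {η ρ : ℝ}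
    (hcontr : ∀ v, ‖v - η • T v‖ ≤ ρ * ‖v‖) (U : Matrix ι κ ℝ) (B : Matrix κ ι ℝ)
    (ys : κ → EuclideanSpace ℝ ι) (y : EuclideanSpace ℝ ι)
    (hU : ∀ i j, U i j = (g y - g (ys j)) i) :
    ‖g (∑ j, (B *ᵥ g y) j • (ys j - η • g (ys j)) + (1 - ∑ j, (B *ᵥ g y) j) • (y - η • g y))‖ ≤
      ‖Matrix.toEuclideanLin (1 - U * B) (g y)‖ / ‖g y‖ * ρ * ‖g y‖ := by
  set P := Matrix.toEuclideanLin (1 - U * B)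
  -- if `g y = 0` then also `P (g y) = 0`, so the junk value `0 / 0 = 0` does no harm
  have hP : ‖P (g y)‖ / ‖g y‖ * ‖g y‖ = ‖P (g y)‖ :=
    div_mul_cancel_of_imp fun h => by rw [norm_eq_zero.1 h, map_zero, norm_zero]
  rw [mul_right_comm, hP, mul_comm, gradient_affine_comb_gd_steps hg,
    Matrix.toEuclideanLin_one_sub_mul_apply_eq U B _ _ hU]
  exact hcontr _

namespace LinearMap.IsSymmetric

variable {E : Type*} [NormedAddCommGroup E] [InnerProductSpace ℝ E] [FiniteDimensional ℝ E]
  {T : E →ₗ[ℝ] E}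

theorem norm_apply_le_of_abs_inner_le (hT : T.IsSymmetric) {C : ℝ} (hC0 : 0 ≤ C)
    (hC : ∀ v, |⟪T v, v⟫| ≤ C * ‖v‖ ^ 2) (v : E) : ‖T v‖ ≤ C * ‖v‖ := by
  set T' := LinearMap.toContinuousLinearMap T
  have hT' : (T' : E →ₗ[ℝ] E).IsSymmetric := hT
  have hnorm : ‖T'‖ ≤ C := by
    rw [T'.norm_eq_iSup_rayleighQuotient hT']
    refine ciSup_le fun w => ?_
    rcases eq_or_ne w 0 with rfl | hw
    · simpa using hC0
    · have hw2 : 0 < ‖w‖ ^ 2 := by positivity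
      simpa [abs_div, div_le_iff₀ hw2, ContinuousLinearMap.reApplyInnerSelf_apply, T'] using hC w
  simpa [T'] using T'.le_of_opNorm_le hnorm v

variable {μ L : ℝ}

theorem norm_apply_le (hT : T.IsSymmetric)
    (hspec : ∀ v, μ * ‖v‖ ^ 2 ≤ ⟪T v, v⟫ ∧ ⟪T v, v⟫ ≤ L * ‖v‖ ^ 2) (hμ : 0 ≤ μ) (hμL : μ ≤ L)
    (v : E) : ‖T v‖ ≤ L * ‖v‖ :=
  hT.norm_apply_le_of_abs_inner_le (hμ.trans hμL)
    (fun w => abs_le.2 ⟨by nlinarith [hspec w, sq_nonneg ‖w‖], (hspec w).2⟩) v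

theorem norm_sub_smul_apply_le (hT : T.IsSymmetric)
    (hspec : ∀ v, μ * ‖v‖ ^ 2 ≤ ⟪T v, v⟫ ∧ ⟪T v, v⟫ ≤ L * ‖v‖ ^ 2) (hμL : μ ≤ L) {η : ℝ}
    (hη0 : 0 ≤ η) (hη : η * (L + μ) ≤ 2) (v : E) : ‖v - η • T v‖ ≤ (1 - η * μ) * ‖v‖ := by
  have hS : (LinearMap.id - η • T).IsSymmetric := LinearMap.IsSymmetric.id.sub (hT.smul (by simp))
  refine hS.norm_apply_le_of_abs_inner_le (by nlinarith) (fun w => ?_) v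
  obtain ⟨hlow, hup⟩ := hspec w
  simp only [LinearMap.sub_apply, LinearMap.id_apply, LinearMap.smul_apply, inner_sub_left,
    real_inner_smul_left, real_inner_self_eq_norm_sq]
  exact abs_le.2 ⟨by nlinarith [sq_nonneg ‖w‖], by nlinarith⟩

end LinearMap.IsSymmetric

theorem aa_gd_quadratic_convergence_general
    (n m K : ℕ)
    (A : Matrix (Fin n) (Fin n) ℝ) (hA : A.IsSymm)
    (μ L : ℝ) (hμ : 0 < μ) (hμL : μ ≤ L)
    (hspec : ∀ v : EuclideanSpace ℝ (Fin n),
      μ * ‖v‖ ^ 2 ≤ ⟪Matrix.toEuclideanLin A v, v⟫ ∧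
      ⟪Matrix.toEuclideanLin A v, v⟫ ≤ L * ‖v‖ ^ 2)
    (b : EuclideanSpace ℝ (Fin n))
    (g : EuclideanSpace ℝ (Fin n) → EuclideanSpace ℝ (Fin n))
    (hg : ∀ z, g z = Matrix.toEuclideanLin A z - b)
    (xstar : EuclideanSpace ℝ (Fin n))
    (hxstar : xstar = Matrix.toEuclideanLin A⁻¹ b)
    (η : ℝ) (hη0 : 0 < η) (hη : η ≤ 2 / (L + μ))
    (lam : ℝ)
    (x : ℕ → EuclideanSpace ℝ (Fin n))
    (δ : ℕ → ℝ)
    -- each step `k = 0, …, K` is an Anderson-accelerated gradient step with window `min m k`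
    (hstep : ∀ k ≤ K,
      (min m k = 0 → x (k + 1) = x k - η • g (x k) ∧ δ k = 1) ∧
      (∀ mk : ℕ, min m k = mk → 0 < mk →
        ∃ (U : Matrix (Fin n) (Fin mk) ℝ) (α' : Fin mk → ℝ),
          (∀ (i : Fin n) (j : Fin mk), U i j = (g (x k) - g (x (k - mk + j))) i) ∧
          α' = ((Uᵀ * U + lam • 1)⁻¹ * Uᵀ).mulVec (g (x k)) ∧
          x (k + 1) =
            (∑ j : Fin mk, α' j • (x (k - mk + j) - η • g (x (k - mk + j))))
              + (1 - ∑ j, α' j) • (x k - η • g (x k)) ∧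
          δ k = ‖Matrix.toEuclideanLin (1 - U * (Uᵀ * U + lam • 1)⁻¹ * Uᵀ) (g (x k))‖
                  / ‖g (x k)‖)) :
    ‖x (K + 1) - xstar‖ ≤
      (∏ j ∈ Finset.range (K + 1), δ j) * (1 - η * μ) ^ (K + 1) * (L / μ) * ‖x 0 - xstar‖ := by
  set T := Matrix.toEuclideanLin A
  have hT : T.IsSymmetric :=
    Matrix.isSymmetric_toEuclideanLin_iff.2 (Matrix.isHermitian_iff_isSymm.2 hA)
  have hgT : ∀ z, g z = T (z - xstar) := fun z => by
    rw [hg, map_sub, hxstar, Matrix.toEuclideanLin_apply_toEuclideanLin_inv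
      (T.injective_of_mul_norm_sq_le_inner hμ fun v => (hspec v).1)]
  have hηLμ : η * (L + μ) ≤ 2 := by rwa [le_div_iff₀ (by linarith)] at hη
  have hcontr := hT.norm_sub_smul_apply_le hspec hμL hη0.le hηLμ
  have hρ : 0 ≤ 1 - η * μ := by nlinarith
  have hdescent : ∀ k ≤ K,
      0 ≤ δ k * (1 - η * μ) ∧ ‖g (x (k + 1))‖ ≤ δ k * (1 - η * μ) * ‖g (x k)‖ := by
    intro k hk
    rcases Nat.eq_zero_or_pos (min m k) with h0 | hpos
    · obtain ⟨hx1, hδ⟩ := (hstep k hk).1 h0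
      rw [hδ, one_mul, hx1, gradient_gd_step hgT]
      exact ⟨hρ, hcontr _⟩
    · obtain ⟨U, α', hU, rfl, hx1, hδ⟩ := (hstep k hk).2 _ rfl hpos
      rw [Matrix.mul_assoc] at hδ
      refine ⟨mul_nonneg (by rw [hδ]; positivity) hρ, ?_⟩
      rw [hx1, hδ]
      exact norm_gradient_anderson_step_le hgT hcontr U _ _ _ hU
  have hc0 : 0 ≤ ∏ j ∈ range (K + 1), δ j * (1 - η * μ) :=
    prod_nonneg fun j hj => (hdescent j (Nat.lt_succ_iff.1 (mem_range.1 hj))).1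
  have hgrad := le_prod_range_mul_of_le_mul (e := fun k => ‖g (x k)‖)
    (fun k hk => (hdescent k hk).1) (fun k hk => (hdescent k hk).2)
  rw [prod_mul_distrib, prod_const, card_range] at hc0 hgrad
  have hlast : μ * ‖x (K + 1) - xstar‖ ≤ ‖g (x (K + 1))‖ :=
    hgT _ ▸ mul_norm_le_norm_of_mul_norm_sq_le_inner (hspec _).1
  have hfirst : ‖g (x 0)‖ ≤ L * ‖x 0 - xstar‖ := hgT _ ▸ hT.norm_apply_le hspec hμ.le hμL _
  calc ‖x (K + 1) - xstar‖ ≤ ‖g (x (K + 1))‖ / μ := by rwa [le_div_iff₀' hμ]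
    _ ≤ (∏ j ∈ range (K + 1), δ j) * (1 - η * μ) ^ (K + 1) * (L * ‖x 0 - xstar‖) / μ := by
        gcongr
        exact hgrad.trans (by gcongr)
    _ = _ := by ring

/-- **Convergence of Anderson-accelerated gradient descent for quadratic functions.**
For `f x = ½ xᵀAx − bᵀx` with symmetric `A` whose spectrum lies in `[μ, L]`, `0 < μ ≤ L`,
minimizer `x* = A⁻¹ b`, step size `0 < η ≤ 2/(L+μ)`, window `m ≥ 1`, regularization
`lam > 0`: if the iterates `x_0, …, x_{K+1}` are produced by Anderson-accelerated
gradient steps with window `m_k = min m k` (plain gradient descent with `δ_k = 1`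
when `m_k = 0`), then
`‖x_{K+1} − x*‖ ≤ (∏_{j=0}^{K} δ_j) (1−ημ)^{K+1} (L/μ) ‖x_0 − x*‖`. -/
theorem aa_gd_quadratic_convergence
    (n m K : ℕ) (hn : 1 ≤ n) (hm : 1 ≤ m)
    (A : Matrix (Fin n) (Fin n) ℝ) (hA : A.IsSymm)
    (μ L : ℝ) (hμ : 0 < μ) (hμL : μ ≤ L)
    (hspec : ∀ v : EuclideanSpace ℝ (Fin n),
      μ * ‖v‖ ^ 2 ≤ ⟪Matrix.toEuclideanLin A v, v⟫ ∧
      ⟪Matrix.toEuclideanLin A v, v⟫ ≤ L * ‖v‖ ^ 2)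
    (b : EuclideanSpace ℝ (Fin n))
    (g : EuclideanSpace ℝ (Fin n) → EuclideanSpace ℝ (Fin n))
    (hg : ∀ z, g z = Matrix.toEuclideanLin A z - b)
    (xstar : EuclideanSpace ℝ (Fin n))
    (hxstar : xstar = Matrix.toEuclideanLin A⁻¹ b)
    (η : ℝ) (hη0 : 0 < η) (hη : η ≤ 2 / (L + μ))
    (lam : ℝ) (hlam : 0 < lam)
    (x : ℕ → EuclideanSpace ℝ (Fin n))
    (δ : ℕ → ℝ)
    -- each step `k = 0, …, K` is an Anderson-accelerated gradient step with window `min m k`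
    (hstep : ∀ k ≤ K,
      (min m k = 0 → x (k + 1) = x k - η • g (x k) ∧ δ k = 1) ∧
      (∀ mk : ℕ, min m k = mk → 0 < mk →
        ∃ (U : Matrix (Fin n) (Fin mk) ℝ) (α' : Fin mk → ℝ),
          (∀ (i : Fin n) (j : Fin mk), U i j = (g (x k) - g (x (k - mk + j))) i) ∧
          α' = ((Uᵀ * U + lam • 1)⁻¹ * Uᵀ).mulVec (g (x k)) ∧
          x (k + 1) =
            (∑ j : Fin mk, α' j • (x (k - mk + j) - η • g (x (k - mk + j))))
              + (1 - ∑ j, α' j) • (x k - η • g (x k)) ∧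
          δ k = ‖Matrix.toEuclideanLin (1 - U * (Uᵀ * U + lam • 1)⁻¹ * Uᵀ) (g (x k))‖
                  / ‖g (x k)‖)) :
    ‖x (K + 1) - xstar‖ ≤
      (∏ j ∈ Finset.range (K + 1), δ j) * (1 - η * μ) ^ (K + 1) * (L / μ) * ‖x 0 - xstar‖ :=
  aa_gd_quadratic_convergence_general n m K A hA μ L hμ hμL hspec b g hg xstar hxstar η hη0 hη lam x
    δ hstep
end

section
/- Let f : ℝⁿ → ℝ be twice continuously differentiable with μI ≼ ∇²f(x) ≼ LI for all x, where 0 < μ ≤ L, and suppose ‖∇²f(u) − ∇²f(v)‖ ≤ ω for all u, v ∈ ℝⁿ. Fix 0 < η ≤ 2/(L+μ), m ≥ 1, λ > 0. Given x_{k−m}, …, x_k ∈ ℝⁿ with ∇f(x_k) ≠ 0, let U_k be the n×m matrix with columns ∇f(x_k) − ∇f(x_j), j = k−m, …, k−1; set α' = (α_{k−m}, …, α_{k−1})ᵀ = (U_kᵀU_k + λI)⁻¹U_kᵀ∇f(x_k), α_k = 1 − Σ_{j=k−m}^{k−1} α_j, and x_{k+1} = Σ_{j=k−m}^{k} α_j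 (x_j − η∇f(x_j)). Then ‖∇f(x_{k+1})‖ ≤ (1 − ημ) δ_k ‖∇f(x_k)‖ + ω ‖α'‖ (Σ_{j=k−m}^{k−1} ‖x_k − x_j‖²)^{1/2}, where Π_k = I − U_k(U_kᵀU_k + λI)⁻¹U_kᵀ and δ_k = ‖Π_k∇f(x_k)‖/‖∇f(x_k)‖ ≤ 1. -/
/-!
Write `r = Π_k ∇f(x_k) = ∇f(x_k) - Σ α_j (∇f(x_k) - ∇f(x_j))` for the mixed residual and
`x̄ = x_k - Σ α_j (x_k - x_j)` for the mixed point; the Anderson iterate is then the gradient step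
`x_{k+1} = x̄ - η r`, and
`∇f(x_{k+1}) = (∇f(x̄ - η r) - ∇f(x̄) + r) + (∇f(x̄) - r)`.
The first term is at most `(1 - ημ) ‖r‖ = (1 - ημ) δ_k ‖∇f(x_k)‖` because the gradient-step map
`y ↦ y - η ∇f(y)` has the symmetric derivative `I - η ∇²f` with spectrum in `[1 - ηL, 1 - ημ]`, and
`η (L + μ) ≤ 2`. The second term vanishes for quadratic `f`; in general, differentiating
`t ↦ ∇f(x_k - t Σ α_j (x_k - x_j)) - Σ α_j ∇f(x_k - t (x_k - x_j))` and using the oscillation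
bound gives `ω Σ |α_j| ‖x_k - x_j‖`, and Cauchy–Schwarz finishes. Finally `δ_k ≤ 1` since the
normal equations `(UᵀU + λI) α = Uᵀg` give `‖g - Uα‖² = ‖g‖² - ‖Uα‖² - 2λ‖α‖²`.
-/

open scoped RealInnerProductSpace Matrix
open Finset

section InnerProduct

variable {E : Type*} [NormedAddCommGroup E] [InnerProductSpace ℝ E]

theorem LinearMap.IsSymmetric.opNorm_le_of_abs_inner_le {T : E →L[ℝ] E}
    (hT : (T : E →ₗ[ℝ] E).IsSymmetric) {c : ℝ} (hc : 0 ≤ c)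
    (h : ∀ v, |⟪T v, v⟫| ≤ c * ‖v‖ ^ 2) : ‖T‖ ≤ c := by
  rw [T.norm_eq_iSup_rayleighQuotient hT]
  refine ciSup_le fun v => ?_
  rcases eq_or_ne v 0 with rfl | hv
  · simpa using hc
  rw [ContinuousLinearMap.rayleighQuotient, ContinuousLinearMap.reApplyInnerSelf_apply,
    abs_div, abs_sq, div_le_iff₀ (by positivity)]
  exact h v

theorem norm_id_sub_smul_le {T : E →L[ℝ] E} (hT : (T : E →ₗ[ℝ] E).IsSymmetric)
    {μ L η : ℝ} (hμT : ∀ v, μ * ‖v‖ ^ 2 ≤ ⟪T v, v⟫) (hTL : ∀ v, ⟪T v, v⟫ ≤ L * ‖v‖ ^ 2)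
    (hμL : μ ≤ L) (hη : 0 ≤ η) (hηLμ : η * (L + μ) ≤ 2) :
    ‖ContinuousLinearMap.id ℝ E - η • T‖ ≤ 1 - η * μ := by
  have hsymm : ((ContinuousLinearMap.id ℝ E - η • T : E →L[ℝ] E) : E →ₗ[ℝ] E).IsSymmetric := by
    intro u v
    simp only [ContinuousLinearMap.toLinearMap_sub, ContinuousLinearMap.toLinearMap_smul,
      ContinuousLinearMap.coe_id, LinearMap.sub_apply, LinearMap.smul_apply, LinearMap.id_apply,
      inner_sub_left, inner_sub_right, real_inner_smul_left, real_inner_smul_right]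
    rw [hT u v]
  refine hsymm.opNorm_le_of_abs_inner_le (by nlinarith) fun v => ?_
  have hv : ⟪(ContinuousLinearMap.id ℝ E - η • T) v, v⟫ = ‖v‖ ^ 2 - η * ⟪T v, v⟫ := by
    simp [inner_sub_left, real_inner_smul_left]
  rw [hv, abs_le]
  have h1 := mul_le_mul_of_nonneg_left (hμT v) hη
  have h2 := mul_le_mul_of_nonneg_left (hTL v) hη
  constructor <;> nlinarith [sq_nonneg ‖v‖]

theorem norm_sub_smul_sub_sub_smul_le {g : E → E} (hg : Differentiable ℝ g)
    (hsymm : ∀ z, (fderiv ℝ g z : E →ₗ[ℝ] E).IsSymmetric) {μ L η : ℝ}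
    (hμg : ∀ z v, μ * ‖v‖ ^ 2 ≤ ⟪fderiv ℝ g z v, v⟫)
    (hgL : ∀ z v, ⟪fderiv ℝ g z v, v⟫ ≤ L * ‖v‖ ^ 2)
    (hμL : μ ≤ L) (hη : 0 ≤ η) (hηLμ : η * (L + μ) ≤ 2) (x y : E) :
    ‖(y - η • g y) - (x - η • g x)‖ ≤ (1 - η * μ) * ‖y - x‖ := by
  have hstep : ∀ z, HasFDerivAt (fun w => w - η • g w)
      (ContinuousLinearMap.id ℝ E - η • fderiv ℝ g z) z :=
    fun z => (hasFDerivAt_id z).sub ((hg z).hasFDerivAt.const_smul η)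
  exact convex_univ.norm_image_sub_le_of_norm_hasFDerivWithin_le
    (fun z _ => (hstep z).hasFDerivWithinAt)
    (fun z _ => norm_id_sub_smul_le (hsymm z) (hμg z) (hgL z) hμL hη hηLμ)
    (Set.mem_univ x) (Set.mem_univ y)

theorem norm_apply_sub_smul_sub_add_le {g : E → E} (hg : Differentiable ℝ g)
    (hsymm : ∀ z, (fderiv ℝ g z : E →ₗ[ℝ] E).IsSymmetric) {μ L η : ℝ}
    (hμg : ∀ z v, μ * ‖v‖ ^ 2 ≤ ⟪fderiv ℝ g z v, v⟫)
    (hgL : ∀ z v, ⟪fderiv ℝ g z v, v⟫ ≤ L * ‖v‖ ^ 2)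
    (hμL : μ ≤ L) (hη : 0 < η) (hηLμ : η * (L + μ) ≤ 2) (x r : E) :
    ‖g (x - η • r) - g x + r‖ ≤ (1 - η * μ) * ‖r‖ := by
  have h := norm_sub_smul_sub_sub_smul_le hg hsymm hμg hgL hμL hη.le hηLμ x (x - η • r)
  have e : x - η • r - η • g (x - η • r) - (x - η • g x) = -(η • (g (x - η • r) - g x + r)) := by
    module
  rw [e, norm_neg, norm_smul, sub_sub_cancel_left, norm_neg, norm_smul, Real.norm_of_nonneg hη.le,
    mul_left_comm] at h
  exact le_of_mul_le_mul_left h hη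

end InnerProduct

section MeanValue

variable {E F : Type*} [NormedAddCommGroup E] [NormedSpace ℝ E]
  [NormedAddCommGroup F] [NormedSpace ℝ F]

theorem norm_apply_sub_sum_smul_sub_le {g : E → F} (hg : Differentiable ℝ g) {ω : ℝ}
    (hosc : ∀ u v, ‖fderiv ℝ g u - fderiv ℝ g v‖ ≤ ω) {ι : Type*} [Fintype ι]
    (a : ι → ℝ) (y : E) (z : ι → E) :
    ‖g (y - ∑ j, a j • (y - z j)) - (g y - ∑ j, a j • (g y - g (z j)))‖ ≤
      ω * ∑ j, |a j| * ‖y - z j‖ := by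
  have hline : ∀ (v : E) (t : ℝ),
      HasDerivAt (fun s : ℝ => g (y - s • v)) (-fderiv ℝ g (y - t • v) v) t := by
    intro v t
    have := (hg (y - t • v)).hasFDerivAt.comp_hasDerivAt t
      (((hasDerivAt_id t).smul_const v).const_sub y)
    simpa [Function.comp_def] using this
  set d := ∑ j, a j • (y - z j)
  have hψ : ∀ t : ℝ, HasDerivAt (fun s : ℝ => g (y - s • d) - ∑ j, a j • g (y - s • (y - z j)))
      (∑ j, a j • (fderiv ℝ g (y - t • (y - z j)) - fderiv ℝ g (y - t • d)) (y - z j)) t := by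
    intro t
    refine ((hline d t).sub (HasDerivAt.fun_sum (u := univ)
      (A := fun j s => a j • g (y - s • (y - z j)))
      fun j _ => (hline (y - z j) t).const_smul (a j))).congr_deriv ?_
    generalize fderiv ℝ g (y - t • d) = A
    simp only [d, map_sum, map_smul]
    simp only [sub_apply, smul_sub, smul_neg, sum_sub_distrib, sum_neg_distrib]
    abel
  have hbound : ∀ t : ℝ, ‖∑ j, a j • (fderiv ℝ g (y - t • (y - z j)) - fderiv ℝ g (y - t • d))
      (y - z j)‖ ≤ ω * ∑ j, |a j| * ‖y - z j‖ := by
    intro t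
    rw [mul_sum]
    refine (norm_sum_le _ _).trans (sum_le_sum fun j _ => ?_)
    rw [norm_smul, Real.norm_eq_abs, mul_left_comm]
    exact mul_le_mul_of_nonneg_left (((fderiv ℝ g _ - fderiv ℝ g _).le_opNorm _).trans
      (mul_le_mul_of_nonneg_right (hosc _ _) (norm_nonneg _))) (abs_nonneg _)
  have := norm_image_sub_le_of_norm_deriv_le_segment_01'
    (fun t _ => (hψ t).hasDerivWithinAt) (fun t _ => hbound t)
  convert this using 2
  simp only [one_smul, zero_smul, sub_zero, sub_sub_cancel, smul_sub, sum_sub_distrib]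
  abel

theorem norm_apply_sub_sum_smul_sub_le_sqrt_mul_sqrt {g : E → F} (hg : Differentiable ℝ g)
    {ω : ℝ} (hosc : ∀ u v, ‖fderiv ℝ g u - fderiv ℝ g v‖ ≤ ω) {ι : Type*} [Fintype ι]
    (a : ι → ℝ) (y : E) (z : ι → E) :
    ‖g (y - ∑ j, a j • (y - z j)) - (g y - ∑ j, a j • (g y - g (z j)))‖ ≤
      ω * (√(∑ j, a j ^ 2) * √(∑ j, ‖y - z j‖ ^ 2)) := by
  refine (norm_apply_sub_sum_smul_sub_le hg hosc a y z).trans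
    (mul_le_mul_of_nonneg_left ?_ ((norm_nonneg _).trans (hosc y y)))
  simpa only [sq_abs] using Real.sum_mul_le_sqrt_mul_sqrt univ (|a ·|) (‖y - z ·‖)

end MeanValue

section Gradient

variable {F : Type*} [NormedAddCommGroup F] [InnerProductSpace ℝ F] [CompleteSpace F]
  {f : F → ℝ}

theorem contDiff_gradient {n : WithTop ℕ∞} (hf : ContDiff ℝ (n + 1) f) :
    ContDiff ℝ n (gradient f) :=
  (InnerProductSpace.toDual ℝ F).symm.contDiff.comp (hf.fderiv_right le_rfl)

theorem inner_fderiv_gradient_apply (z u v : F) :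
    ⟪fderiv ℝ (gradient f) z u, v⟫ = fderiv ℝ (fderiv ℝ f) z u v := by
  rw [show gradient f = (InnerProductSpace.toDual ℝ F).symm ∘ fderiv ℝ f from rfl,
    LinearIsometryEquiv.comp_fderiv]
  exact InnerProductSpace.toDual_symm_apply

theorem isSymmetric_fderiv_gradient (hf : ContDiff ℝ 2 f) (z : F) :
    (fderiv ℝ (gradient f) z : F →ₗ[ℝ] F).IsSymmetric := by
  intro u v
  simp only [ContinuousLinearMap.coe_coe]
  rw [inner_fderiv_gradient_apply, real_inner_comm, inner_fderiv_gradient_apply]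
  exact hf.contDiffAt.isSymmSndFDerivAt (by simp) u v

end Gradient

section RegularizedLeastSquares

variable {ι κ : Type*} [Fintype ι] [Fintype κ]

theorem toEuclideanLin_one_sub_mul_apply [DecidableEq ι] (U : Matrix ι κ ℝ) (B : Matrix κ ι ℝ)
    (c : κ → EuclideanSpace ℝ ι) (hU : ∀ i j, U i j = c j i) (v : EuclideanSpace ℝ ι) :
    Matrix.toEuclideanLin (1 - U * B) v = v - ∑ j, (B *ᵥ v) j • c j := by
  ext i
  simp only [Matrix.toLpLin_apply, Matrix.sub_mulVec, Matrix.one_mulVec, ← Matrix.mulVec_mulVec]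
  simp [Matrix.mulVec, dotProduct, hU, mul_comm, -Matrix.mulVec_mulVec]

theorem norm_toEuclideanLin_one_sub_mul_inv_mul_le [DecidableEq ι] [DecidableEq κ]
    (U : Matrix ι κ ℝ) {lam : ℝ} (hlam : 0 < lam) (v : EuclideanSpace ℝ ι) :
    ‖Matrix.toEuclideanLin (1 - U * (Uᵀ * U + lam • 1)⁻¹ * Uᵀ) v‖ ≤ ‖v‖ := by
  set S := Uᵀ * U + lam • 1
  have hS : S.PosDef := by
    refine Matrix.PosDef.posSemidef_add (by simpa using U.posSemidef_conjTranspose_mul_self) ?_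
    rw [Matrix.smul_one_eq_diagonal]
    exact Matrix.posDef_diagonal_iff.mpr fun _ => hlam
  set a := (S⁻¹ * Uᵀ) *ᵥ v.ofLp
  have hSa : S *ᵥ a = Uᵀ *ᵥ v.ofLp := by
    rw [Matrix.mulVec_mulVec, ← Matrix.mul_assoc, Matrix.mul_nonsing_inv _ hS.det_pos.ne'.isUnit,
      Matrix.one_mul]
  have hPv : (Matrix.toEuclideanLin (1 - U * S⁻¹ * Uᵀ) v).ofLp = v.ofLp - U *ᵥ a := by
    simp [Matrix.mul_assoc, a]
  have hva : v.ofLp ⬝ᵥ (U *ᵥ a) = (U *ᵥ a) ⬝ᵥ (U *ᵥ a) + lam * (a ⬝ᵥ a) := by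
    rw [Matrix.dotProduct_mulVec, ← Matrix.mulVec_transpose, ← hSa]
    simp [S, Matrix.add_mulVec, Matrix.smul_mulVec, add_dotProduct, Matrix.dotProduct_mulVec,
      ← Matrix.mulVec_transpose, Matrix.mulVec_mulVec]
  have hnorm : ∀ w : EuclideanSpace ℝ ι, ‖w‖ ^ 2 = w.ofLp ⬝ᵥ w.ofLp := fun w => by
    rw [← real_inner_self_eq_norm_sq, EuclideanSpace.inner_eq_star_dotProduct, star_trivial]
  refine (sq_le_sq₀ (norm_nonneg _) (norm_nonneg _)).mp ?_
  rw [hnorm, hnorm, hPv, sub_dotProduct, dotProduct_sub, dotProduct_sub,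
    dotProduct_comm (U *ᵥ a), hva]
  have ha : 0 ≤ a ⬝ᵥ a := by simpa using dotProduct_star_self_nonneg a
  have hUa : 0 ≤ U *ᵥ a ⬝ᵥ U *ᵥ a := by simpa using dotProduct_star_self_nonneg (U *ᵥ a)
  nlinarith

end RegularizedLeastSquares

theorem sum_smul_sub_smul_add_one_sub_sum_smul {R V ι : Type*} [CommRing R] [AddCommGroup V]
    [Module R V] [Fintype ι] (a : ι → R) (η : R) (y h : V) (z g : ι → V) :
    ∑ j, a j • (z j - η • g j) + (1 - ∑ j, a j) • (y - η • h) =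
      (y - ∑ j, a j • (y - z j)) - η • (h - ∑ j, a j • (h - g j)) := by
  simp only [smul_sub, sub_smul, one_smul, sum_smul, sum_sub_distrib, smul_sum, smul_comm η]
  abel

theorem aa_gd_nonquadratic_one_step_general
    (n m : ℕ)
    (f : EuclideanSpace ℝ (Fin n) → ℝ) (hf : ContDiff ℝ 2 f)
    (μ L ω : ℝ) (hμL : μ ≤ L)
    -- eigenvalues of the Hessian lie in `[μ, L]` at every point
    (hspec : ∀ (z : EuclideanSpace ℝ (Fin n)) (v : EuclideanSpace ℝ (Fin n)),
      μ * ‖v‖ ^ 2 ≤ ⟪fderiv ℝ (gradient f) z v, v⟫ ∧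
      ⟪fderiv ℝ (gradient f) z v, v⟫ ≤ L * ‖v‖ ^ 2)
    -- oscillation of the Hessian is bounded by `ω` in operator norm
    (hosc : ∀ u v : EuclideanSpace ℝ (Fin n),
      ‖fderiv ℝ (gradient f) u - fderiv ℝ (gradient f) v‖ ≤ ω)
    (η : ℝ) (hη0 : 0 < η) (hη : η ≤ 2 / (L + μ))
    (lam : ℝ) (hlam : 0 < lam)
    -- the window of points `x 0, …, x m`, where `x (Fin.last m)` plays the role of `x_k`
    (x : Fin (m + 1) → EuclideanSpace ℝ (Fin n))
    -- the matrix `U_k`, with columns `∇f(x_k) − ∇f(x_j)`, `j = k−m, …, k−1`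
    (U : Matrix (Fin n) (Fin m) ℝ)
    (hU : ∀ (i : Fin n) (j : Fin m),
      U i j = (gradient f (x (Fin.last m)) - gradient f (x j.castSucc)) i)
    -- the regularized least-squares coefficients
    (α' : Fin m → ℝ)
    (hα' : α' = ((Uᵀ * U + lam • 1)⁻¹ * Uᵀ).mulVec
      (gradient f (x (Fin.last m)) : EuclideanSpace ℝ (Fin n)))
    (αk : ℝ) (hαk : αk = 1 - ∑ j, α' j)
    -- the Anderson-accelerated iterate `x_{k+1}`
    (xnew : EuclideanSpace ℝ (Fin n))
    (hxnew : xnew =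
      (∑ j : Fin m, α' j • (x j.castSucc - η • gradient f (x j.castSucc)))
        + αk • (x (Fin.last m) - η • gradient f (x (Fin.last m))))
    -- the projection operator `Π_k` and the gain `δ_k`
    (P : Matrix (Fin n) (Fin n) ℝ)
    (hP : P = 1 - U * (Uᵀ * U + lam • 1)⁻¹ * Uᵀ)
    (δ : ℝ)
    (hδ : δ = ‖Matrix.toEuclideanLin P (gradient f (x (Fin.last m)))‖
                / ‖gradient f (x (Fin.last m))‖) :
    ‖gradient f xnew‖ ≤
      (1 - η * μ) * δ * ‖gradient f (x (Fin.last m))‖ +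
        ω * Real.sqrt (∑ j : Fin m, (α' j) ^ 2) *
          Real.sqrt (∑ j : Fin m, ‖x (Fin.last m) - x j.castSucc‖ ^ 2) ∧
    δ ≤ 1 := by
  set xk := x (Fin.last m)
  set G := gradient f xk
  set xb := xk - ∑ j, α' j • (xk - x j.castSucc)
  set r := G - ∑ j, α' j • (G - gradient f (x j.castSucc))
  have hg : Differentiable ℝ (gradient f) :=
    (contDiff_gradient (n := 1) hf).differentiable one_ne_zero
  have hPG : Matrix.toEuclideanLin P G = r := by
    rw [hP, Matrix.mul_assoc, toEuclideanLin_one_sub_mul_apply U _ _ hU, ← hα']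
  have hδG : δ * ‖G‖ = ‖r‖ := by
    rw [hδ, ← hPG]
    exact div_mul_cancel_of_imp fun h => by rw [norm_eq_zero.mp h, map_zero, norm_zero]
  have hxnew' : xnew = xb - η • r := by
    rw [hxnew, hαk]
    exact sum_smul_sub_smul_add_one_sub_sum_smul α' η xk G _ _
  have hηLμ : η * (L + μ) ≤ 2 := by
    rwa [le_div_iff₀ ((div_pos_iff_of_pos_left two_pos).mp (hη0.trans_le hη))] at hη
  have hstep : ‖gradient f xnew - gradient f xb + r‖ ≤ (1 - η * μ) * ‖r‖ := by
    rw [hxnew']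
    exact norm_apply_sub_smul_sub_add_le hg (isSymmetric_fderiv_gradient hf)
      (fun z v => (hspec z v).1) (fun z v => (hspec z v).2) hμL hη0 hηLμ xb r
  have hmix : ‖gradient f xb - r‖ ≤
      ω * (√(∑ j, α' j ^ 2) * √(∑ j : Fin m, ‖xk - x j.castSucc‖ ^ 2)) :=
    norm_apply_sub_sum_smul_sub_le_sqrt_mul_sqrt hg hosc α' xk (x ·.castSucc)
  refine ⟨?_, ?_⟩
  · calc ‖gradient f xnew‖ = ‖(gradient f xnew - gradient f xb + r) + (gradient f xb - r)‖ := by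
          congr 1; abel
      _ ≤ (1 - η * μ) * ‖r‖ + ω * (√(∑ j, α' j ^ 2) * √(∑ j : Fin m, ‖xk - x j.castSucc‖ ^ 2)) :=
        (norm_add_le _ _).trans (add_le_add hstep hmix)
      _ = _ := by rw [← hδG]; ring
  · rw [hδ, hP]
    exact div_le_one_of_le₀ (norm_toEuclideanLin_one_sub_mul_inv_mul_le U hlam G)
      (norm_nonneg _)

/-- **Anderson-accelerated gradient step on a non-quadratic function: one-step bound.**
For `f ∈ C²` with `μI ≼ ∇²f ≼ LI` everywhere (`0 < μ ≤ L`) and Hessian oscillation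
uniformly bounded by `ω`, step size `0 < η ≤ 2/(L+μ)`, window `m ≥ 1`, regularization
`lam > 0`, the Anderson step satisfies
`‖∇f(x_{k+1})‖ ≤ (1−ημ) δ_k ‖∇f(x_k)‖ + ω ‖α'‖ (Σ_j ‖x_k − x_j‖²)^{1/2}` with `δ_k ≤ 1`. -/
theorem aa_gd_nonquadratic_one_step
    (n m : ℕ) (hn : 1 ≤ n) (hm : 1 ≤ m)
    (f : EuclideanSpace ℝ (Fin n) → ℝ) (hf : ContDiff ℝ 2 f)
    (μ L ω : ℝ) (hμ : 0 < μ) (hμL : μ ≤ L)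
    -- eigenvalues of the Hessian lie in `[μ, L]` at every point
    (hspec : ∀ (z : EuclideanSpace ℝ (Fin n)) (v : EuclideanSpace ℝ (Fin n)),
      μ * ‖v‖ ^ 2 ≤ ⟪fderiv ℝ (gradient f) z v, v⟫ ∧
      ⟪fderiv ℝ (gradient f) z v, v⟫ ≤ L * ‖v‖ ^ 2)
    -- oscillation of the Hessian is bounded by `ω` in operator norm
    (hosc : ∀ u v : EuclideanSpace ℝ (Fin n),
      ‖fderiv ℝ (gradient f) u - fderiv ℝ (gradient f) v‖ ≤ ω)
    (η : ℝ) (hη0 : 0 < η) (hη : η ≤ 2 / (L + μ))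
    (lam : ℝ) (hlam : 0 < lam)
    -- the window of points `x 0, …, x m`, where `x (Fin.last m)` plays the role of `x_k`
    (x : Fin (m + 1) → EuclideanSpace ℝ (Fin n))
    (hgk : gradient f (x (Fin.last m)) ≠ 0)
    -- the matrix `U_k`, with columns `∇f(x_k) − ∇f(x_j)`, `j = k−m, …, k−1`
    (U : Matrix (Fin n) (Fin m) ℝ)
    (hU : ∀ (i : Fin n) (j : Fin m),
      U i j = (gradient f (x (Fin.last m)) - gradient f (x j.castSucc)) i)
    -- the regularized least-squares coefficients
    (α' : Fin m → ℝ)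
    (hα' : α' = ((Uᵀ * U + lam • 1)⁻¹ * Uᵀ).mulVec
      (gradient f (x (Fin.last m)) : EuclideanSpace ℝ (Fin n)))
    (αk : ℝ) (hαk : αk = 1 - ∑ j, α' j)
    -- the Anderson-accelerated iterate `x_{k+1}`
    (xnew : EuclideanSpace ℝ (Fin n))
    (hxnew : xnew =
      (∑ j : Fin m, α' j • (x j.castSucc - η • gradient f (x j.castSucc)))
        + αk • (x (Fin.last m) - η • gradient f (x (Fin.last m))))
    -- the projection operator `Π_k` and the gain `δ_k`
    (P : Matrix (Fin n) (Fin n) ℝ)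
    (hP : P = 1 - U * (Uᵀ * U + lam • 1)⁻¹ * Uᵀ)
    (δ : ℝ)
    (hδ : δ = ‖Matrix.toEuclideanLin P (gradient f (x (Fin.last m)))‖
                / ‖gradient f (x (Fin.last m))‖) :
    ‖gradient f xnew‖ ≤
      (1 - η * μ) * δ * ‖gradient f (x (Fin.last m))‖ +
        ω * Real.sqrt (∑ j : Fin m, (α' j) ^ 2) *
          Real.sqrt (∑ j : Fin m, ‖x (Fin.last m) - x j.castSucc‖ ^ 2) ∧
    δ ≤ 1 :=
  aa_gd_nonquadratic_one_step_general n m f hf μ L ω hμL hspec hosc η hη0 hη lam hlam x U hU α' hα'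
    αk hαk xnew hxnew P hP δ hδ
end

section
/- Let M be an n×n real symmetric matrix whose eigenvalues all lie in [0, ρ] with 0 < ρ < 1, and set γ = (1 − √(1−ρ))/(1 + √(1−ρ)). Then for every integer k ≥ 1 there exists a real polynomial p of degree at most k with p(1) = 1 such that ‖p(M)‖ ≤ 2γᵏ/(1 + γ^{2k}), where p(M) denotes the matrix obtained by evaluating p at M and ‖·‖ is the operator norm. In particular, for every e₀ ∈ ℝⁿ, min over real polynomials p of degree at most k with p(1)=1 of ‖p(M)e₀‖ is at most (2γᵏ/(1+γ^{2k}))‖e₀‖. -/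
open scoped RealInnerProductSpace Matrix
open Polynomial

/-!
The polynomial is the Chebyshev polynomial `T_k` transplanted from `[-1, 1]` to `[0, ρ]` and
normalized at `1`: `p(x) = T_k(2x/ρ - 1) / T_k(2/ρ - 1)`. It is bounded by `|T_k(2/ρ - 1)|⁻¹` on
`[0, ρ]`, and since `2/ρ - 1 = (γ + γ⁻¹)/2` the identity `T_k((w + w⁻¹)/2) = (wᵏ + w⁻ᵏ)/2` gives
`T_k(2/ρ - 1) = (1 + γ^{2k})/(2γᵏ)`. A symmetric `M` acts diagonally on an orthonormal eigenbasis,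
and its eigenvalues lie in `[0, ρ]` by the bounds on `⟪Mv, v⟫`, so `‖p(M)‖` is at most the
maximum of `|p|` over `[0, ρ]`.
-/

theorem Polynomial.Chebyshev.eval_T_real_add_inv_div_two (n : ℤ) {w : ℝ} (hw : 0 < w) :
    (T ℝ n).eval ((w + w⁻¹) / 2) = (w ^ n + (w ^ n)⁻¹) / 2 := by
  rw [← Real.cosh_log hw, T_real_cosh, ← Real.log_zpow, Real.cosh_log (zpow_pos hw n)]

noncomputable def chebyshevFactor (ρ : ℝ) : ℝ := (1 - √(1 - ρ)) / (1 + √(1 - ρ))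

theorem chebyshevFactor_pos {ρ : ℝ} (hρ : 0 < ρ) : 0 < chebyshevFactor ρ := by
  have hs : √(1 - ρ) < 1 := (Real.sqrt_lt' one_pos).2 (by linarith)
  unfold chebyshevFactor
  exact div_pos (by linarith) (by positivity)

theorem chebyshevFactor_add_inv_div_two {ρ : ℝ} (hρ0 : 0 < ρ) (hρ1 : ρ ≤ 1) :
    (chebyshevFactor ρ + (chebyshevFactor ρ)⁻¹) / 2 = 2 / ρ - 1 := by
  have hs2 : √(1 - ρ) ^ 2 = 1 - ρ := Real.sq_sqrt (by linarith)
  have hs1 : √(1 - ρ) < 1 := (Real.sqrt_lt' one_pos).2 (by linarith)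
  have h1s : 0 < 1 - √(1 - ρ) := by linarith
  unfold chebyshevFactor
  rw [inv_div]
  field_simp
  linear_combination 4 * hs2

theorem eval_T_two_div_sub_one {ρ : ℝ} (hρ0 : 0 < ρ) (hρ1 : ρ ≤ 1) (k : ℕ) :
    (Chebyshev.T ℝ k).eval (2 / ρ - 1) =
      (1 + chebyshevFactor ρ ^ (2 * k)) / (2 * chebyshevFactor ρ ^ k) := by
  have hγ := chebyshevFactor_pos hρ0
  rw [← chebyshevFactor_add_inv_div_two hρ0 hρ1, Chebyshev.eval_T_real_add_inv_div_two _ hγ,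
    zpow_natCast]
  field_simp
  ring

noncomputable def shiftedChebyshev (ρ : ℝ) (k : ℕ) : ℝ[X] :=
  C ((Chebyshev.T ℝ k).eval (2 / ρ - 1))⁻¹ * (Chebyshev.T ℝ k).comp (C (2 / ρ) * X - 1)

theorem natDegree_shiftedChebyshev_le (ρ : ℝ) (k : ℕ) : (shiftedChebyshev ρ k).natDegree ≤ k :=
  calc (shiftedChebyshev ρ k).natDegree
      ≤ (Chebyshev.T ℝ k).natDegree * (C (2 / ρ) * X - 1 : ℝ[X]).natDegree :=
        (natDegree_C_mul_le _ _).trans natDegree_comp_le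
    _ ≤ k * 1 := Nat.mul_le_mul (by simp [Chebyshev.natDegree_T]) (by compute_degree)
    _ = k := mul_one k

theorem eval_one_shiftedChebyshev {ρ : ℝ} {k : ℕ} (h : (Chebyshev.T ℝ k).eval (2 / ρ - 1) ≠ 0) :
    (shiftedChebyshev ρ k).eval 1 = 1 := by
  simp [shiftedChebyshev, eval_comp, h]

theorem abs_eval_shiftedChebyshev_le {ρ x : ℝ} (hρ : 0 < ρ) (hx : x ∈ Set.Icc 0 ρ) (k : ℕ) :
    |(shiftedChebyshev ρ k).eval x| ≤ |(Chebyshev.T ℝ k).eval (2 / ρ - 1)|⁻¹ := by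
  obtain ⟨hx0, hxρ⟩ := hx
  have hy0 : 0 ≤ 2 / ρ * x := by positivity
  have hy2 : 2 / ρ * x ≤ 2 :=
    calc 2 / ρ * x ≤ 2 / ρ * ρ := by gcongr
      _ = 2 := div_mul_cancel₀ 2 hρ.ne'
  have hy : |2 / ρ * x - 1| ≤ 1 := abs_le.2 ⟨by linarith, by linarith⟩
  simp only [shiftedChebyshev, eval_mul, eval_C, eval_comp, eval_sub, eval_X, eval_one,
    abs_mul, abs_inv]
  exact mul_le_of_le_one_right (by positivity) (Chebyshev.abs_eval_T_real_le_one k hy)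

theorem Module.End.HasEigenvalue.mem_Icc_of_inner_apply_self {E : Type*} [NormedAddCommGroup E]
    [InnerProductSpace ℝ E] {T : E →ₗ[ℝ] E} {μ ρ : ℝ} (hμ : Module.End.HasEigenvalue T μ)
    (h : ∀ v, 0 ≤ ⟪T v, v⟫ ∧ ⟪T v, v⟫ ≤ ρ * ‖v‖ ^ 2) : μ ∈ Set.Icc 0 ρ := by
  obtain ⟨x, hx⟩ := hμ.exists_hasEigenvector
  have hx0 : 0 < ‖x‖ ^ 2 := pow_pos (norm_pos_iff.2 hx.2) 2
  obtain ⟨h0, hρ⟩ := h x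
  rw [hx.apply_eq_smul, real_inner_smul_left, real_inner_self_eq_norm_sq] at h0 hρ
  exact ⟨nonneg_of_mul_nonneg_left h0 hx0, le_of_mul_le_mul_right hρ hx0⟩

theorem OrthonormalBasis.norm_apply_le_of_apply_eq_smul {ι 𝕜 E : Type*} [Fintype ι] [RCLike 𝕜]
    [NormedAddCommGroup E] [InnerProductSpace 𝕜 E] (b : OrthonormalBasis ι 𝕜 E)
    {A : E →ₗ[𝕜] E} {c : ι → 𝕜} (hA : ∀ i, A (b i) = c i • b i) {B : ℝ} (hB0 : 0 ≤ B)
    (hB : ∀ i, ‖c i‖ ≤ B) (v : E) : ‖A v‖ ≤ B * ‖v‖ := by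
  classical
  have hrepr : ∀ i, b.repr (A v) i = c i * b.repr v i := fun i => by
    conv_lhs => rw [← b.sum_repr v]
    simp [map_sum, hA, smul_smul, b.repr_self, Pi.single_apply, mul_comm]
  rw [← b.repr.norm_map (A v), ← b.repr.norm_map v, EuclideanSpace.norm_eq,
    EuclideanSpace.norm_eq, ← Real.sqrt_sq hB0, ← Real.sqrt_mul (sq_nonneg B), Finset.mul_sum]
  gcongr with i
  rw [hrepr, norm_mul, mul_pow]
  gcongr
  exact hB i

theorem LinearMap.IsSymmetric.norm_aeval_apply_le {E : Type*} [NormedAddCommGroup E]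
    [InnerProductSpace ℝ E] [FiniteDimensional ℝ E] {T : E →ₗ[ℝ] E} (hT : T.IsSymmetric)
    (p : ℝ[X]) {B : ℝ} (hB0 : 0 ≤ B) (hB : ∀ μ, Module.End.HasEigenvalue T μ → |p.eval μ| ≤ B)
    (v : E) :
    ‖aeval T p v‖ ≤ B * ‖v‖ :=
  (hT.eigenvectorBasis rfl).norm_apply_le_of_apply_eq_smul
    (fun i => Module.End.aeval_apply_of_hasEigenvector (hT.hasEigenvector_eigenvectorBasis rfl i))
    hB0 (fun i => hB _ (hT.hasEigenvalue_eigenvalues rfl i)) v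

theorem Matrix.toEuclideanLin_aeval {𝕜 ι : Type*} [RCLike 𝕜] [Fintype ι] [DecidableEq ι]
    (M : Matrix ι ι 𝕜) (p : 𝕜[X]) :
    Matrix.toEuclideanLin (aeval M p) = aeval (Matrix.toEuclideanLin M) p :=
  (aeval_algHom_apply (Matrix.toLinAlgEquiv (EuclideanSpace.basisFun ι 𝕜).toBasis) M p).symm

theorem chebyshev_poly_matrix_bound_general
    (n : ℕ)
    (M : Matrix (Fin n) (Fin n) ℝ) (hM : M.IsSymm)
    (ρ : ℝ) (hρ0 : 0 < ρ) (hρ1 : ρ < 1)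
    (hspec : ∀ v : EuclideanSpace ℝ (Fin n),
      0 ≤ ⟪Matrix.toEuclideanLin M v, v⟫ ∧
      ⟪Matrix.toEuclideanLin M v, v⟫ ≤ ρ * ‖v‖ ^ 2)
    (γ : ℝ) (hγ : γ = (1 - Real.sqrt (1 - ρ)) / (1 + Real.sqrt (1 - ρ)))
    (k : ℕ) :
    (∃ p : Polynomial ℝ, p.natDegree ≤ k ∧ p.eval 1 = 1 ∧
      ∀ v : EuclideanSpace ℝ (Fin n),
        ‖Matrix.toEuclideanLin (Polynomial.aeval M p) v‖ ≤
          (2 * γ ^ k / (1 + γ ^ (2 * k))) * ‖v‖) ∧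
    (∀ e₀ : EuclideanSpace ℝ (Fin n),
      ∃ p : Polynomial ℝ, p.natDegree ≤ k ∧ p.eval 1 = 1 ∧
        ‖Matrix.toEuclideanLin (Polynomial.aeval M p) e₀‖ ≤
          (2 * γ ^ k / (1 + γ ^ (2 * k))) * ‖e₀‖) := by
  obtain rfl : γ = chebyshevFactor ρ := hγ
  have hc := eval_T_two_div_sub_one hρ0 hρ1.le k
  have hγ0 := chebyshevFactor_pos hρ0
  have hc0 : 0 < (Chebyshev.T ℝ k).eval (2 / ρ - 1) := hc ▸ by positivity
  have hp1 := eval_one_shiftedChebyshev hc0.ne'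
  have hT : (Matrix.toEuclideanLin M).IsSymmetric :=
    Matrix.isSymmetric_toEuclideanLin_iff.2 (Matrix.isHermitian_iff_isSymm.2 hM)
  have hbound : ∀ v : EuclideanSpace ℝ (Fin n),
      ‖Matrix.toEuclideanLin (aeval M (shiftedChebyshev ρ k)) v‖ ≤
        (2 * chebyshevFactor ρ ^ k / (1 + chebyshevFactor ρ ^ (2 * k))) * ‖v‖ := fun v => by
    rw [Matrix.toEuclideanLin_aeval]
    refine hT.norm_aeval_apply_le _ (by positivity) (fun μ hμ => ?_) v
    have := abs_eval_shiftedChebyshev_le hρ0 (hμ.mem_Icc_of_inner_apply_self hspec) k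
    rwa [abs_of_pos hc0, hc, inv_div] at this
  exact ⟨⟨_, natDegree_shiftedChebyshev_le ρ k, hp1, hbound⟩,
    fun e₀ => ⟨_, natDegree_shiftedChebyshev_le ρ k, hp1, hbound e₀⟩⟩

/-- **Chebyshev polynomial bound for symmetric matrices with spectrum in `[0, ρ]`.**
If `M` is symmetric with eigenvalues in `[0, ρ]`, `0 < ρ < 1`, and
`γ = (1 − √(1−ρ))/(1 + √(1−ρ))`, then for every `k ≥ 1` there is a real polynomial `p`
of degree at most `k` with `p(1) = 1` and `‖p(M)‖ ≤ 2γᵏ/(1 + γ^{2k})` (operator norm);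
in particular, for every `e₀`, the minimum of `‖p(M)e₀‖` over such polynomials is
at most `(2γᵏ/(1 + γ^{2k})) ‖e₀‖`. -/
theorem chebyshev_poly_matrix_bound
    (n : ℕ)
    (M : Matrix (Fin n) (Fin n) ℝ) (hM : M.IsSymm)
    (ρ : ℝ) (hρ0 : 0 < ρ) (hρ1 : ρ < 1)
    (hspec : ∀ v : EuclideanSpace ℝ (Fin n),
      0 ≤ ⟪Matrix.toEuclideanLin M v, v⟫ ∧
      ⟪Matrix.toEuclideanLin M v, v⟫ ≤ ρ * ‖v‖ ^ 2)
    (γ : ℝ) (hγ : γ = (1 - Real.sqrt (1 - ρ)) / (1 + Real.sqrt (1 - ρ)))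
    (k : ℕ) (hk : 1 ≤ k) :
    (∃ p : Polynomial ℝ, p.natDegree ≤ k ∧ p.eval 1 = 1 ∧
      ∀ v : EuclideanSpace ℝ (Fin n),
        ‖Matrix.toEuclideanLin (Polynomial.aeval M p) v‖ ≤
          (2 * γ ^ k / (1 + γ ^ (2 * k))) * ‖v‖) ∧
    (∀ e₀ : EuclideanSpace ℝ (Fin n),
      ∃ p : Polynomial ℝ, p.natDegree ≤ k ∧ p.eval 1 = 1 ∧
        ‖Matrix.toEuclideanLin (Polynomial.aeval M p) e₀‖ ≤
          (2 * γ ^ k / (1 + γ ^ (2 * k))) * ‖e₀‖) :=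
  chebyshev_poly_matrix_bound_general n M hM ρ hρ0 hρ1 hspec γ hγ k
end

section
/- Let f : ℝⁿ → ℝ be twice continuously differentiable and η ∈ ℝ. Let x_{k−m}, …, x_k ∈ ℝⁿ and real coefficients α_{k−m}, …, α_k with Σ_{j=k−m}^{k} α_j = 1, and set y = Σ_{j=k−m}^{k} α_j x_j. Define the averaged Hessians H_j = ∫₀¹ ∇²f(t x_j + (1−t) x_k) dt for j = k−m, …, k−1 and H = ∫₀¹ ∇²f(t x_k + (1−t) y) dt. Then Σ_{j=k−m}^{k} α_j (x_j − η∇f(x_j)) − (y − η∇f(y)) = η Σ_{j=k−m}^{k−1} α_j (H_j − H)(x_k − x_j). In particular, if ∇²f is constant (f quadratic), the left-hand side vanishes: the affine combination of gradient-descent updates equals the gradient-descent update of the affine combination. -/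
/-!
Write `g = ∇f`, which is `C¹`. By the fundamental theorem of calculus along a segment, the
averaged Hessians satisfy `H_j (x_k - x_j) = g x_k - g x_j` and `H (x_k - y) = g x_k - g y`.
Since the `α_j` sum to one, `x_k - y = ∑_{j<k} α_j (x_k - x_j)`, so the linearity of `H` turns
`g y - ∑ α_j g x_j` into `∑_{j<k} α_j (H_j - H)(x_k - x_j)`; the `x`-parts of the
gradient-descent updates cancel because `y` is the same affine combination of the `x_j`.
-/

open Finset

theorem ContDiff.gradient {F : Type*} [NormedAddCommGroup F] [InnerProductSpace ℝ F]
    [CompleteSpace F] {f : F → ℝ} {n : WithTop ℕ∞} (hf : ContDiff ℝ (n + 1) f) :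
    ContDiff ℝ n (gradient f) :=
  (InnerProductSpace.toDual ℝ F).symm.contDiff.comp (hf.fderiv_right le_rfl)

section MeanValue

variable {E F : Type*} [NormedAddCommGroup E] [NormedSpace ℝ E]
  [NormedAddCommGroup F] [NormedSpace ℝ F] [CompleteSpace F]

theorem ContDiff.intervalIntegral_fderiv_segment_apply {g : E → F} (hg : ContDiff ℝ 1 g)
    (u v : E) :
    (∫ t in (0:ℝ)..1, fderiv ℝ g (t • u + (1 - t) • v)) (u - v) = g u - g v := by
  have hsegment : ∀ t : ℝ, HasDerivAt (fun s : ℝ => s • u + (1 - s) • v) (u - v) t := by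
    intro t
    convert AffineMap.hasDerivAt_lineMap (a := v) (b := u) (x := t) using 1
    ext s
    rw [AffineMap.lineMap_apply_module, add_comm]
  have hcont : Continuous fun t : ℝ => fderiv ℝ g (t • u + (1 - t) • v) :=
    (hg.continuous_fderiv one_ne_zero).comp (by fun_prop)
  rw [ContinuousLinearMap.intervalIntegral_apply (hcont.intervalIntegrable 0 1)]
  simpa using intervalIntegral.integral_eq_sub_of_hasDerivAt
    (fun t _ => ((hg.differentiable one_ne_zero _).hasFDerivAt).comp_hasDerivAt t (hsegment t))
    ((hcont.clm_apply continuous_const).intervalIntegrable 0 1)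

end MeanValue

section AffineCombination

variable {R M N : Type*} [CommRing R] [AddCommGroup M] [Module R M] [AddCommGroup N] [Module R N]
  {m : ℕ} {α : Fin (m + 1) → R}

theorem sub_sum_smul_eq_sum_castSucc_smul_sub (hα : ∑ j, α j = 1) (v : Fin (m + 1) → M) :
    v (Fin.last m) - ∑ j, α j • v j =
      ∑ j : Fin m, α j.castSucc • (v (Fin.last m) - v j.castSucc) := by
  have hfull : v (Fin.last m) - ∑ j, α j • v j = ∑ j, α j • (v (Fin.last m) - v j) := by
    simp only [smul_sub, sum_sub_distrib, ← sum_smul, hα, one_smul]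
  rw [hfull, Fin.sum_univ_castSucc, sub_self, smul_zero, add_zero]

theorem map_sub_sum_smul_map_eq_sum_castSucc_smul {F : Type*} [FunLike F M N]
    [LinearMapClass F R M N]
    (g : M → N) (B : F) (hα : ∑ j, α j = 1) (x : Fin (m + 1) → M) {y : M}
    (hy : y = ∑ j, α j • x j) (hB : B (x (Fin.last m) - y) = g (x (Fin.last m)) - g y) :
    g y - ∑ j, α j • g (x j) = ∑ j : Fin m, α j.castSucc •
      (g (x (Fin.last m)) - g (x j.castSucc) - B (x (Fin.last m) - x j.castSucc)) := by
  calc g y - ∑ j, α j • g (x j)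
      = (g (x (Fin.last m)) - ∑ j, α j • g (x j)) - B (x (Fin.last m) - y) := by
        rw [hB]; abel
    _ = ∑ j : Fin m, α j.castSucc • (g (x (Fin.last m)) - g (x j.castSucc)) -
          B (∑ j : Fin m, α j.castSucc • (x (Fin.last m) - x j.castSucc)) := by
        rw [sub_sum_smul_eq_sum_castSucc_smul_sub hα fun j => g (x j), hy,
          sub_sum_smul_eq_sum_castSucc_smul_sub hα x]
    _ = _ := by
        rw [map_sum, ← sum_sub_distrib]
        refine sum_congr rfl fun j _ => ?_
        rw [map_smul, ← smul_sub]

theorem sum_smul_sub_smul_map_sub_eq (g : M → M) (η : R) (x : Fin (m + 1) → M) {y : M}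
    (hy : y = ∑ j, α j • x j) :
    ∑ j, α j • (x j - η • g (x j)) - (y - η • g y) = η • (g y - ∑ j, α j • g (x j)) := by
  simp only [smul_sub, sum_sub_distrib, ← hy, smul_comm (α _) η, ← smul_sum]
  abel

end AffineCombination

/-- **Averaged-Hessian identity for affine combinations of gradient-descent updates.**
For `f ∈ C²`, coefficients `α_j` summing to one, `y = Σ α_j x_j`, averaged Hessians
`H_j = ∫₀¹ ∇²f(t x_j + (1−t) x_k) dt` and `H = ∫₀¹ ∇²f(t x_k + (1−t) y) dt`, one has
`Σ_j α_j (x_j − η∇f(x_j)) − (y − η∇f(y)) = η Σ_{j<k} α_j (H_j − H)(x_k − x_j)`.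
In particular, the left-hand side vanishes when the Hessian is constant. -/
theorem aa_gd_averaged_hessian_identity
    (n m : ℕ)
    (f : EuclideanSpace ℝ (Fin n) → ℝ) (hf : ContDiff ℝ 2 f)
    (η : ℝ)
    -- the points `x 0, …, x m`, where `x (Fin.last m)` plays the role of `x_k`
    (x : Fin (m + 1) → EuclideanSpace ℝ (Fin n))
    (α : Fin (m + 1) → ℝ) (hα : ∑ j, α j = 1)
    (y : EuclideanSpace ℝ (Fin n)) (hy : y = ∑ j, α j • x j)
    -- the averaged Hessians along the segments from `x_k` to `x_j` and from `y` to `x_k`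
    (Hj : Fin m → (EuclideanSpace ℝ (Fin n) →L[ℝ] EuclideanSpace ℝ (Fin n)))
    (hHj : ∀ j : Fin m, Hj j =
      ∫ t in (0:ℝ)..1, fderiv ℝ (gradient f) (t • x j.castSucc + (1 - t) • x (Fin.last m)))
    (H : EuclideanSpace ℝ (Fin n) →L[ℝ] EuclideanSpace ℝ (Fin n))
    (hH : H = ∫ t in (0:ℝ)..1, fderiv ℝ (gradient f) (t • x (Fin.last m) + (1 - t) • y)) :
    ((∑ j, α j • (x j - η • gradient f (x j))) - (y - η • gradient f y) =
      η • ∑ j : Fin m, α j.castSucc • ((Hj j - H) (x (Fin.last m) - x j.castSucc))) ∧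
    ((∀ z w : EuclideanSpace ℝ (Fin n), fderiv ℝ (gradient f) z = fderiv ℝ (gradient f) w) →
      (∑ j, α j • (x j - η • gradient f (x j))) - (y - η • gradient f y) = 0) := by
  have hg : ContDiff ℝ 1 (gradient f) := hf.gradient
  have hHj_apply : ∀ j : Fin m, Hj j (x (Fin.last m) - x j.castSucc) =
      gradient f (x (Fin.last m)) - gradient f (x j.castSucc) := fun j => by
    rw [← neg_sub, map_neg, hHj, hg.intervalIntegral_fderiv_segment_apply, neg_sub]
  have hH_apply : H (x (Fin.last m) - y) = gradient f (x (Fin.last m)) - gradient f y := by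
    rw [hH, hg.intervalIntegral_fderiv_segment_apply]
  have identity : (∑ j, α j • (x j - η • gradient f (x j))) - (y - η • gradient f y) =
      η • ∑ j : Fin m, α j.castSucc • ((Hj j - H) (x (Fin.last m) - x j.castSucc)) := by
    rw [sum_smul_sub_smul_map_sub_eq _ η x hy,
      map_sub_sum_smul_map_eq_sum_castSucc_smul _ H hα x hy hH_apply]
    simp only [sub_apply, hHj_apply]
  refine ⟨identity, fun hconst => ?_⟩
  have hHj_eq_H : ∀ j, Hj j = H := fun j => by
    simp only [hHj, hH, hconst _ (x (Fin.last m))]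
  simp only [identity, hHj_eq_H, sub_self, zero_apply, smul_zero, sum_const_zero]
end

section
/- Let f : ℝⁿ → ℝ be differentiable, let c ∈ ℝ satisfy f(x) + c > 0 for all x, let η > 0, and define the AEGD iteration: F(x) = √(f(x)+c), r_0 = F(x_0) > 0, and for k ≥ 0, v_k = ∇f(x_k)/(2F(x_k)), r_{k+1} = r_k/(1 + 2η‖v_k‖²), x_{k+1} = x_k − 2η r_{k+1} v_k. Then for every k ≥ 0: r_k > 0, r_{k+1} ≤ r_k (with strict inequality whenever ∇f(x_k) ≠ 0), and r_k − r_{k+1} = 2η r_{k+1} ‖v_k‖². In particular the energy sequence (r_k) is monotonically decreasing and bounded in (0, r_0], regardless of the size of the step size η > 0 (unconditional energy stability). -/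
/-- **Unconditional energy stability of AEGD.**
With `F(x) = √(f(x)+c)`, `r_0 = F(x_0)`, `v_k = ∇f(x_k)/(2F(x_k))`,
`r_{k+1} = r_k/(1+2η‖v_k‖²)`, `x_{k+1} = x_k − 2η r_{k+1} v_k`, the energies satisfy
`r_k > 0`, `r_{k+1} ≤ r_k` (strictly when `∇f(x_k) ≠ 0`),
`r_k − r_{k+1} = 2η r_{k+1} ‖v_k‖²`, and `r_k ≤ r_0`, for every step size `η > 0`. -/
theorem aegd_unconditional_energy_stability
    (n : ℕ)
    (f : EuclideanSpace ℝ (Fin n) → ℝ) (hf : Differentiable ℝ f)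
    (c : ℝ) (hc : ∀ z, 0 < f z + c)
    (η : ℝ) (hη : 0 < η)
    (x : ℕ → EuclideanSpace ℝ (Fin n))
    (v : ℕ → EuclideanSpace ℝ (Fin n))
    (r : ℕ → ℝ)
    (hr0 : r 0 = Real.sqrt (f (x 0) + c))
    (hv : ∀ k, v k = (1 / (2 * Real.sqrt (f (x k) + c))) • gradient f (x k))
    (hr : ∀ k, r (k + 1) = r k / (1 + 2 * η * ‖v k‖ ^ 2))
    (hx : ∀ k, x (k + 1) = x k - (2 * η * r (k + 1)) • v k) :
    ∀ k, 0 < r k ∧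
      r (k + 1) ≤ r k ∧
      (gradient f (x k) ≠ 0 → r (k + 1) < r k) ∧
      r k - r (k + 1) = 2 * η * r (k + 1) * ‖v k‖ ^ 2 ∧
      r k ≤ r 0 := by
  -- positivity of r k by induction
  have hden : ∀ k, (1:ℝ) ≤ 1 + 2 * η * ‖v k‖ ^ 2 := by
    intro k
    nlinarith [norm_nonneg (v k), sq_nonneg ‖v k‖]
  have hpos : ∀ k, 0 < r k := by
    intro k
    induction k with
    | zero => rw [hr0]; exact Real.sqrt_pos.mpr (hc _)
    | succ k ih =>
        rw [hr k]
        exact div_pos ih (lt_of_lt_of_le one_pos (hden k))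
  have hle : ∀ k, r (k + 1) ≤ r k := by
    intro k
    rw [hr k]
    exact div_le_self (hpos k).le (hden k)
  have hle0 : ∀ k, r k ≤ r 0 := by
    intro k
    induction k with
    | zero => exact le_refl _
    | succ k ih => exact (hle k).trans ih
  intro k
  refine ⟨hpos k, hle k, ?_, ?_, hle0 k⟩
  · intro hg
    have hv0 : v k ≠ 0 := by
      rw [hv k]
      have : (1 / (2 * Real.sqrt (f (x k) + c))) ≠ 0 := by
        have := Real.sqrt_pos.mpr (hc (x k))
        positivity
      exact smul_ne_zero this hg
    have hvn : 0 < ‖v k‖ ^ 2 := by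
      have := norm_pos_iff.mpr hv0
      positivity
    rw [hr k]
    have hd1 : (1:ℝ) < 1 + 2 * η * ‖v k‖ ^ 2 := by nlinarith
    exact div_lt_self (hpos k) hd1
  · have hd : (0:ℝ) < 1 + 2 * η * ‖v k‖ ^ 2 := lt_of_lt_of_le one_pos (hden k)
    rw [hr k]
    field_simp
    ring
end
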